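/- arXiv:1408.5701 — 2 statements merged into one kernel-verified Lean document; each statement's English description precedes it below -/
import Mathlib

section
/- Let μ be a finite Borel measure on [0,1] and f(x) = ∫_{[0,1]} x/((1−t)x + t) dμ(t) for x > 0. Then f(x) = 1 for all x > 0 if and only if μ is the Dirac measure at 0. -/
open MeasureTheory Set

/-!
At `x = 1` the integrand is identically `1`, so `f 1 = 1` says that `μ` is a probability measure.
At `x = 1/2` the integrand is `1 / (1 + t) ≤ 1`, with equality only at `t = 0`; so `f (1/2) = 1`
forces `μ` to be concentrated at `0`.
-/

theorem half_div_one_sub_mul_half_add (t : ℝ) : 1 / 2 / ((1 - t) * (1 / 2) + t) = 1 / (1 + t) := by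
  rw [show (1 - t) * (1 / 2) + t = (1 + t) / 2 by ring, div_div_div_cancel_right₀ two_ne_zero]

theorem MeasureTheory.Measure.eq_dirac_of_ae_eq {α : Type*} [MeasurableSpace α]
    [MeasurableSingletonClass α] {μ : Measure α} [IsProbabilityMeasure μ] {a : α}
    (h : ∀ᵐ x ∂μ, x = a) : μ = dirac a := by
  have h_univ : μ {a} = 1 := (prob_compl_eq_zero_iff (measurableSet_singleton a)).mp (ae_iff.mp h)
  calc μ = μ.restrict {a} := (Measure.restrict_eq_self_of_ae_mem h).symm
    _ = dirac a := by rw [Measure.restrict_singleton, h_univ, one_smul]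

theorem eq_dirac_zero_of_integral_one_div_one_add_eq_one {μ : Measure (Icc (0:ℝ) 1)}
    [IsProbabilityMeasure μ] (h : ∫ t, 1 / (1 + (t:ℝ)) ∂μ = 1) :
    μ = Measure.dirac ⟨0, by norm_num⟩ := by
  have h_int : Integrable (fun t : Icc (0:ℝ) 1 ↦ 1 / (1 + (t:ℝ))) μ := by
    refine Continuous.integrable_of_hasCompactSupport ?_ (.of_compactSpace _)
    exact continuous_const.div (by fun_prop) fun t ↦ by linarith [t.2.1]
  have h_le : (fun t : Icc (0:ℝ) 1 ↦ 1 / (1 + (t:ℝ))) ≤ᵐ[μ] 1 :=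
    .of_forall fun t ↦ div_le_one_of_le₀ (by linarith [t.2.1]) (by linarith [t.2.1])
  have h_eq := (integral_eq_iff_of_ae_le h_int (integrable_const 1) h_le).mp (by simpa using h)
  refine Measure.eq_dirac_of_ae_eq (h_eq.mono fun t ht ↦ Subtype.ext ?_)
  have ht : 1 / (1 + (t:ℝ)) = 1 := ht
  rw [div_eq_one_iff_eq (by linarith [t.2.1])] at ht
  change (t:ℝ) = 0
  linarith

/-- For a finite Borel measure `μ` on `[0,1]` and `f x = ∫ x/((1-t)x+t) dμ(t)` for `x > 0`,
`f` is constantly `1` on `(0,∞)` iff `μ` is the Dirac measure at `0`. -/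
theorem stmt_8 (μ : Measure (Set.Icc (0:ℝ) 1))
    (f : ℝ → ℝ) (hf : ∀ x > (0:ℝ), f x = ∫ t, x / ((1 - (t:ℝ)) * x + (t:ℝ)) ∂μ) :
    (∀ x > (0:ℝ), f x = 1) ↔ μ = Measure.dirac ⟨0, by norm_num⟩ := by
  constructor
  · intro h
    have h_mass : μ.real univ = 1 := by
      simpa using (hf 1 one_pos).symm.trans (h 1 one_pos)
    have : IsProbabilityMeasure μ := ⟨(ENNReal.toReal_eq_one_iff _).mp h_mass⟩
    apply eq_dirac_zero_of_integral_one_div_one_add_eq_one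
    simpa only [half_div_one_sub_mul_half_add] using
      (hf (1 / 2) one_half_pos).symm.trans (h (1 / 2) one_half_pos)
  · rintro rfl x hx
    rw [hf x hx, integral_dirac]
    simp [hx.ne']
end

section
/- Let A, B be positive definite matrices (or positive invertible operators on a Hilbert space). Then A ≤ B if and only if A ≤ A # B, where A # B = A^{1/2}(A^{-1/2}BA^{-1/2})^{1/2}A^{1/2} is the geometric mean; and this is also equivalent to A # B ≤ B. -/
open scoped ComplexOrder

/-- The geometric mean `A # B = A^{1/2} (A^{-1/2} B A^{-1/2})^{1/2} A^{1/2}` of positive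
definite matrices, via the continuous functional calculus. -/
noncomputable def geomMean {n : Type*} [Fintype n] [DecidableEq n]
    (A B : Matrix n n ℂ) : Matrix n n ℂ :=
  let s := cfc Real.sqrt A
  s * cfc Real.sqrt (s⁻¹ * B * s⁻¹) * s

/-! With `s = a^{1/2}` and `c = s⁻¹ b s⁻¹` we have `a = s 1 s`, `b = s c s` and
`a # b = s c^{1/2} s`. Congruence by the invertible self-adjoint `s` preserves the order, so the
three inequalities `a ≤ b`, `a ≤ a # b`, `a # b ≤ b` become `1 ≤ c`, `1 ≤ c^{1/2}`, `c^{1/2} ≤ c`.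
By the functional calculus each of these says that the spectrum of `c`, which is positive,
lies in `[1, ∞)`, since for `x > 0` we have `1 ≤ x ↔ 1 ≤ √x ↔ √x ≤ x`. -/

theorem IsUnit.conj_le_conj_iff_of_isSelfAdjoint {R : Type*} [Ring R] [StarRing R]
    [PartialOrder R] [StarOrderedRing R] {s x y : R} (hu : IsUnit s) (hs : IsSelfAdjoint s) :
    s * x * s ≤ s * y * s ↔ x ≤ y := by
  have h : s * y * s - s * x * s = star s * (y - x) * s := by rw [hs.star_eq]; noncomm_ring
  rw [← sub_nonneg, h, hu.star_left_conjugate_nonneg_iff, sub_nonneg]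

section GeomMean

variable {R : Type*} [Ring R] [StarRing R] [TopologicalSpace R] [Algebra ℝ R]
  [ContinuousFunctionalCalculus ℝ R IsSelfAdjoint]

noncomputable def cfcGeomMean (a b : R) : R :=
  let s := cfc Real.sqrt a
  s * cfc Real.sqrt (Ring.inverse s * b * Ring.inverse s) * s

variable [PartialOrder R] [StarOrderedRing R] [NonnegSpectrumClass ℝ R]

theorem cfc_sqrt_mul_self {a : R} (ha : 0 ≤ a) : cfc Real.sqrt a * cfc Real.sqrt a = a := by
  rw [← cfc_mul Real.sqrt Real.sqrt a,
    cfc_congr fun x hx => Real.mul_self_sqrt (spectrum_nonneg_of_nonneg ha hx), cfc_id' ℝ a]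

theorem IsStrictlyPositive.cfc_sqrt {a : R} (ha : IsStrictlyPositive a) :
    IsStrictlyPositive (cfc Real.sqrt a) := by
  refine IsUnit.isStrictlyPositive ?_ (cfc_nonneg fun x _ => Real.sqrt_nonneg x)
  rw [isUnit_cfc_iff Real.sqrt a]
  exact fun x hx => (Real.sqrt_pos.mpr (ha.spectrum_pos hx)).ne'

theorem one_le_iff_forall_spectrum {c : R} (hc : IsSelfAdjoint c) :
    1 ≤ c ↔ ∀ x ∈ spectrum ℝ c, 1 ≤ x := by
  have h := cfc_le_iff (fun _ : ℝ => (1 : ℝ)) (fun x : ℝ => x) c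
  rwa [cfc_const_one ℝ c, cfc_id' ℝ c] at h

theorem one_le_iff_one_le_cfc_sqrt {c : R} (hc : 0 ≤ c) : 1 ≤ c ↔ 1 ≤ cfc Real.sqrt c := by
  have h := cfc_le_iff (fun _ : ℝ => (1 : ℝ)) Real.sqrt c
  rw [cfc_const_one ℝ c] at h
  rw [one_le_iff_forall_spectrum hc.isSelfAdjoint, h]
  exact forall₂_congr fun x _ => Real.one_le_sqrt.symm

theorem one_le_iff_cfc_sqrt_le {c : R} (hc : IsStrictlyPositive c) :
    1 ≤ c ↔ cfc Real.sqrt c ≤ c := by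
  have h := cfc_le_iff Real.sqrt (fun x : ℝ => x) c
  rw [cfc_id' ℝ c] at h
  rw [one_le_iff_forall_spectrum hc.isSelfAdjoint, h]
  exact forall₂_congr fun x hx => by
    rw [Real.sqrt_le_self_iff, or_iff_right (hc.spectrum_pos hx).ne']

theorem le_iff_le_cfcGeomMean_and_le_iff_cfcGeomMean_le {a b : R} (ha : IsStrictlyPositive a)
    (hb : IsStrictlyPositive b) :
    (a ≤ b ↔ a ≤ cfcGeomMean a b) ∧ (a ≤ b ↔ cfcGeomMean a b ≤ b) := by
  set s := cfc Real.sqrt a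
  have hs : IsStrictlyPositive s := ha.cfc_sqrt
  set c := Ring.inverse s * b * Ring.inverse s
  have hc : IsStrictlyPositive c :=
    .conjugate_of_isUnit_of_isSelfAdjoint b _ hs.isUnit.ringInverse hs.isSelfAdjoint.ringInverse hb
  have ha' : s * 1 * s = a := by rw [mul_one, cfc_sqrt_mul_self ha.nonneg]
  have hb' : s * c * s = b := by
    simp only [c, ← mul_assoc, Ring.mul_inverse_cancel s hs.isUnit, one_mul]
    rw [mul_assoc, Ring.inverse_mul_cancel s hs.isUnit, mul_one]
  have hg : cfcGeomMean a b = s * cfc Real.sqrt c * s := rfl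
  have conj (x y : R) : s * x * s ≤ s * y * s ↔ x ≤ y :=
    hs.isUnit.conj_le_conj_iff_of_isSelfAdjoint hs.isSelfAdjoint
  have h₁ : a ≤ b ↔ 1 ≤ c := by rw [← conj 1 c, ha', hb']
  have h₂ : a ≤ cfcGeomMean a b ↔ 1 ≤ cfc Real.sqrt c := by rw [hg, ← conj 1, ha']
  have h₃ : cfcGeomMean a b ≤ b ↔ cfc Real.sqrt c ≤ c := by rw [hg, ← conj _ c, hb']
  rw [h₁, h₂, h₃]
  exact ⟨one_le_iff_one_le_cfc_sqrt hc.nonneg, one_le_iff_cfc_sqrt_le hc⟩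

end GeomMean

theorem geomMean_eq_cfcGeomMean {n : Type*} [Fintype n] [DecidableEq n]
    (A B : Matrix n n ℂ) : geomMean A B = cfcGeomMean A B := by
  simp only [geomMean, cfcGeomMean, Matrix.nonsing_inv_eq_ringInverse]

open scoped MatrixOrder in
/-- For positive definite matrices, `A ≤ B` iff `A ≤ A # B` iff `A # B ≤ B`
(Loewner order). -/
theorem stmt_15 {n : Type*} [Fintype n] [DecidableEq n] (A B : Matrix n n ℂ)
    (hA : A.PosDef) (hB : B.PosDef) :
    ((B - A).PosSemidef ↔ (geomMean A B - A).PosSemidef) ∧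
    ((B - A).PosSemidef ↔ (B - geomMean A B).PosSemidef) := by
  simpa only [Matrix.le_iff, geomMean_eq_cfcGeomMean] using
    le_iff_le_cfcGeomMean_and_le_iff_cfcGeomMean_le hA.isStrictlyPositive hB.isStrictlyPositive
end
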